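/- Fix θ ∈ (0, π] and define ρ_θ(x) = x·sin(2π/x) − (x−2)·sin((2π−θ)/(x−2)) for real x ≥ 4. Then ρ_θ attains its minimum on [4, ∞) at x = 4π/θ, and the minimum value is 2·sin(θ/2). -/

import Mathlib

open Real

noncomputable def ρ (θ x : ℝ) : ℝ :=
  x * Real.sin (2 * π / x) - (x - 2) * Real.sin ((2 * π - θ) / (x - 2))

/-!
Since `x · (2π/x) = (x - 2) · v + 2 · (θ/2)` with `v = (2π - θ)/(x - 2)`, concavity of `sin` on
`[0, π]` gives `(x - 2) sin v + 2 sin (θ/2) ≤ x sin (2π/x)`, i.e. `2 sin (θ/2) ≤ ρ θ x`.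
Equality holds when `v = θ/2`, that is at `x = 4π/θ`.
-/

theorem Real.mul_sin_add_mul_sin_le {p q a b : ℝ} (hp : 0 ≤ p) (hq : 0 ≤ q) (hpq : 0 < p + q)
    (ha : a ∈ Set.Icc 0 π) (hb : b ∈ Set.Icc 0 π) :
    p * sin a + q * sin b ≤ (p + q) * sin ((p * a + q * b) / (p + q)) := by
  have hjensen := strictConcaveOn_sin_Icc.concaveOn.2 ha hb
    (div_nonneg hp hpq.le) (div_nonneg hq hpq.le) (by field_simp)
  simp only [smul_eq_mul] at hjensen
  calc p * sin a + q * sin b = (p + q) * (p / (p + q) * sin a + q / (p + q) * sin b) := by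
        field_simp
    _ ≤ (p + q) * sin (p / (p + q) * a + q / (p + q) * b) := by gcongr
    _ = (p + q) * sin ((p * a + q * b) / (p + q)) := by congr 2; field_simp

theorem two_mul_sin_half_le_ρ {θ x : ℝ} (hθ0 : 0 ≤ θ) (hθ : θ ≤ 2 * π) (hx : 4 ≤ x) :
    2 * sin (θ / 2) ≤ ρ θ x := by
  have hx2 : 0 < x - 2 := by linarith
  have hv : (2 * π - θ) / (x - 2) ∈ Set.Icc 0 π := by
    refine ⟨div_nonneg (by linarith) hx2.le, ?_⟩
    rw [div_le_iff₀ hx2]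
    nlinarith [pi_pos]
  have hconcave := mul_sin_add_mul_sin_le hx2.le zero_le_two (by linarith) hv
    (b := θ / 2) ⟨by linarith, by linarith⟩
  have harg : ((x - 2) * ((2 * π - θ) / (x - 2)) + 2 * (θ / 2)) / (x - 2 + 2) = 2 * π / x := by
    field_simp
    ring
  rw [harg, sub_add_cancel] at hconcave
  unfold ρ
  linarith

theorem ρ_four_mul_pi_div {θ : ℝ} (hθ0 : 0 < θ) (hθ : θ < 2 * π) :
    ρ θ (4 * π / θ) = 2 * sin (θ / 2) := by
  have hx2 : 4 * π / θ - 2 ≠ 0 := by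
    rw [sub_ne_zero, ne_eq, div_eq_iff hθ0.ne']
    linarith
  have h1 : 2 * π / (4 * π / θ) = θ / 2 := by
    field_simp
    ring
  have h2 : (2 * π - θ) / (4 * π / θ - 2) = θ / 2 := by
    rw [div_eq_iff hx2]
    field_simp
    ring
  rw [ρ, h1, h2]
  ring

theorem stmt17 (θ : ℝ) (hθ0 : 0 < θ) (hθ : θ ≤ π) :
    (∀ x : ℝ, 4 ≤ x → 2 * Real.sin (θ / 2) ≤ ρ θ x) ∧
    ρ θ (4 * π / θ) = 2 * Real.sin (θ / 2) := by
  have hπ := pi_pos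
  exact ⟨fun x hx => two_mul_sin_half_le_ρ hθ0.le (by linarith) hx,
    ρ_four_mul_pi_div hθ0 (by linarith)⟩
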